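/- Let A be a von Neumann algebra on a Z/2-graded Hilbert space, graded by τ (i.e., uAu = A for the grading unitary u). Then the double supercommutant satisfies A^♮♮ = A. -/

import Mathlib

open ContinuousLinearMap

variable {H : Type*} [NormedAddCommGroup H] [InnerProductSpace ℂ H] [CompleteSpace H]

/-- Even part of a bounded operator with respect to the grading unitary `u`. -/
noncomputable def evenPart (u x : H →L[ℂ] H) : H →L[ℂ] H := (2⁻¹ : ℂ) • (x + u * x * u)

/-- Odd part of a bounded operator with respect to the grading unitary `u`. -/
noncomputable def oddPart (u x : H →L[ℂ] H) : H →L[ℂ] H := (2⁻¹ : ℂ) • (x - u * x * u)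

/-- Supercommutator `[x,y]_τ = [x₀,y₀] + [x₀,y₁] + [x₁,y₀] + [x₁,y₁]₊`. -/
noncomputable def superComm (u x y : H →L[ℂ] H) : H →L[ℂ] H :=
  (evenPart u x * evenPart u y - evenPart u y * evenPart u x) +
  (evenPart u x * oddPart u y - oddPart u y * evenPart u x) +
  (oddPart u x * evenPart u y - evenPart u y * oddPart u x) +
  (oddPart u x * oddPart u y + oddPart u y * oddPart u x)

/-- Supercommutant of a set of bounded operators. -/
noncomputable def superCommutant (u : H →L[ℂ] H) (S : Set (H →L[ℂ] H)) :
    Set (H →L[ℂ] H) := {b | ∀ a ∈ S, superComm u a b = 0}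

/-!
Conjugation by the Klein transformation `κ` fixes even operators and sends an odd `y` to `i y u`.
For a graded set `S` this turns the supercommutation relations with the even and odd parts of `S`
into ordinary commutation relations, so `S^♮ = κ⁻¹ S' κ`, and `S^♮` is again graded. Applying
this twice, `A^♮♮ = κ⁻² A'' κ² = u A u = A`.
-/

theorem IsIdempotentElem.sub_mul_sub_of_add_eq_one {R : Type*} [Ring R] {p q : R}
    (hp : IsIdempotentElem p) (hpq : p + q = 1) : (p - q) * (p - q) = 1 := by
  obtain rfl : q = 1 - p := eq_sub_of_add_eq' hpq
  have h : (p - (1 - p)) * (p - (1 - p)) = 4 • (p * p - p) + 1 := by noncomm_ring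
  rw [h, hp.eq, sub_self, smul_zero, zero_add]

theorem add_eq_zero_and_sub_eq_zero_iff {G : Type*} [AddCommGroup G] [IsAddTorsionFree G]
    {x y : G} : x + y = 0 ∧ x - y = 0 ↔ x = 0 ∧ y = 0 := by
  refine ⟨fun ⟨hs, hd⟩ => ?_, fun ⟨hx, hy⟩ => by simp [hx, hy]⟩
  have hx : x = 0 :=
    two_nsmul_eq_zero.mp (by rw [show 2 • x = (x + y) + (x - y) by abel, hs, hd, add_zero])
  exact ⟨hx, by simpa [hx] using hs⟩

theorem Set.centralizer_setOf_conj_mem {M : Type*} [Monoid M] {g g' : M} (h : g * g' = 1)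
    (h' : g' * g = 1) (T : Set M) :
    Set.centralizer {b | g * b * g' ∈ T} = {z | g * z * g' ∈ T.centralizer} := by
  ext z
  simp only [Set.mem_centralizer_iff, Set.mem_ofPred_eq]
  refine ⟨fun hz t ht => ?_, fun hz b hb => ?_⟩
  · have hgt : g * (g' * t * g) * g' = t := by
      rw [show g * (g' * t * g) * g' = g * g' * t * (g * g') by simp only [mul_assoc], h, one_mul,
        mul_one]
    have := congrArg (g * · * g') (hz (g' * t * g) (by rwa [hgt]))
    simpa only [mul_assoc, h, mul_one, ← mul_assoc g g', one_mul] using this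
  · have := congrArg (g' * · * g) (hz _ hb)
    simpa only [mul_assoc, h, h', mul_one, ← mul_assoc g' g, one_mul] using this

theorem commute_conj_iff_of_commute {M : Type*} [Monoid M] {g g' x : M} (h' : g' * g = 1)
    (hg : Commute x g) (hg' : Commute x g') (b : M) : Commute x (g * b * g') ↔ Commute x b := by
  refine ⟨fun hb => ?_, fun hb => (hg.mul_right hb).mul_right hg'⟩
  have := (hg'.mul_right hb).mul_right hg
  simpa only [mul_assoc, h', mul_one, ← mul_assoc g' g, one_mul] using this

section Parity

variable {E : Type*} [NormedAddCommGroup E] [InnerProductSpace ℂ E] (u : E →L[ℂ] E)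

instance : IsAddTorsionFree (E →L[ℂ] E) := .of_isTorsionFree ℂ _

theorem evenPart_add_oddPart (x : E →L[ℂ] E) : evenPart u x + oddPart u x = x := by
  simp only [evenPart, oddPart]; module

theorem evenPart_sub_oddPart (x : E →L[ℂ] E) : evenPart u x - oddPart u x = u * x * u := by
  simp only [evenPart, oddPart]; module

theorem superComm_eq (a b : E →L[ℂ] E) :
    superComm u a b = (evenPart u a * b - b * evenPart u a) +
      (oddPart u a * b - u * b * u * oddPart u a) := by
  simp only [superComm, evenPart, oddPart, smul_mul_assoc, mul_smul_comm, mul_add, add_mul,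
    mul_sub, sub_mul, smul_add, smul_sub, mul_assoc]
  module

theorem commute_and_commute_conj_iff (a c : E →L[ℂ] E) :
    Commute a c ∧ Commute (u * a * u) c ↔
      Commute (evenPart u a) c ∧ Commute (oddPart u a) c := by
  refine ⟨fun ⟨h, hconj⟩ => ⟨(h.add_left hconj).smul_left _, (h.sub_left hconj).smul_left _⟩,
    fun ⟨h₀, h₁⟩ => ?_⟩
  exact ⟨evenPart_add_oddPart u a ▸ h₀.add_left h₁, evenPart_sub_oddPart u a ▸ h₀.sub_left h₁⟩

variable {u} (huu : u * u = 1)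
include huu

theorem evenPart_conj (x : E →L[ℂ] E) : evenPart u (u * x * u) = evenPart u x := by
  simp only [evenPart, mul_assoc, huu, mul_one, ← mul_assoc u u, one_mul, add_comm]

theorem oddPart_conj (x : E →L[ℂ] E) : oddPart u (u * x * u) = -oddPart u x := by
  simp only [oddPart, mul_assoc, huu, mul_one, ← mul_assoc u u, one_mul, ← smul_neg, neg_sub]

theorem evenPart_commute (x : E →L[ℂ] E) : Commute (evenPart u x) u := by
  simp only [commute_iff_eq, evenPart, smul_mul_assoc, mul_smul_comm, add_mul, mul_add,
    mul_assoc, huu, mul_one, ← mul_assoc u u, one_mul, add_comm]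

theorem oddPart_anticommute (x : E →L[ℂ] E) : u * oddPart u x = -(oddPart u x * u) := by
  simp only [oddPart, smul_mul_assoc, mul_smul_comm, sub_mul, mul_sub, mul_assoc, huu, mul_one,
    ← mul_assoc u u, one_mul, ← smul_neg, neg_sub]

theorem superComm_conj_left (a b : E →L[ℂ] E) :
    superComm u (u * a * u) b = (evenPart u a * b - b * evenPart u a) -
      (oddPart u a * b - u * b * u * oddPart u a) := by
  rw [superComm_eq, evenPart_conj huu, oddPart_conj huu, neg_mul, mul_neg]
  abel

theorem superComm_eq_zero_and_conj_iff (a b : E →L[ℂ] E) :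
    superComm u a b = 0 ∧ superComm u (u * a * u) b = 0 ↔
      Commute (evenPart u a) b ∧ oddPart u a * b = u * b * u * oddPart u a := by
  rw [superComm_eq, superComm_conj_left huu, add_eq_zero_and_sub_eq_zero_iff, sub_eq_zero,
    sub_eq_zero, commute_iff_eq]

end Parity

section Klein

open Complex

variable {E : Type*} [NormedAddCommGroup E] [InnerProductSpace ℂ E] {u : E →L[ℂ] E}

/-- `klein u = p₀ + i p₁` and `kleinInv u = p₀ - i p₁`, where `p₀ = (1 + u) / 2` and
`p₁ = (1 - u) / 2`. -/
noncomputable def klein (u : E →L[ℂ] E) : E →L[ℂ] E := ((1 + I) / 2) • 1 + ((1 - I) / 2) • u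

noncomputable def kleinInv (u : E →L[ℂ] E) : E →L[ℂ] E := ((1 - I) / 2) • 1 + ((1 + I) / 2) • u

theorem commute_klein {x : E →L[ℂ] E} (hx : Commute x u) : Commute x (klein u) :=
  ((Commute.one_right x).smul_right _).add_right (hx.smul_right _)

theorem commute_kleinInv {x : E →L[ℂ] E} (hx : Commute x u) : Commute x (kleinInv u) :=
  ((Commute.one_right x).smul_right _).add_right (hx.smul_right _)

theorem mul_kleinInv_of_anticommute {y : E →L[ℂ] E} (hy : u * y = -(y * u)) :
    y * kleinInv u = -I • (klein u * y) := by
  simp only [klein, kleinInv, add_mul, mul_add, smul_mul_assoc, mul_smul_comm, one_mul, mul_one,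
    hy, smul_add, smul_neg, smul_smul]
  match_scalars <;> ring_nf <;> simp only [I_sq] <;> ring

theorem kleinInv_mul_of_anticommute {y : E →L[ℂ] E} (hy : u * y = -(y * u)) :
    kleinInv u * y = -I • (y * klein u) := by
  simp only [klein, kleinInv, add_mul, mul_add, smul_mul_assoc, mul_smul_comm, one_mul, mul_one,
    hy, smul_add, smul_neg, smul_smul]
  match_scalars <;> ring_nf <;> simp only [I_sq] <;> ring

variable (huu : u * u = 1)
include huu

theorem klein_mul_kleinInv : klein u * kleinInv u = 1 := by
  simp only [klein, kleinInv, add_mul, mul_add, smul_mul_assoc, mul_smul_comm, one_mul, mul_one,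
    huu]
  match_scalars <;> ring_nf <;> simp only [I_sq] <;> ring

theorem kleinInv_mul_klein : kleinInv u * klein u = 1 := by
  simp only [klein, kleinInv, add_mul, mul_add, smul_mul_assoc, mul_smul_comm, one_mul, mul_one,
    huu]
  match_scalars <;> ring_nf <;> simp only [I_sq] <;> ring

theorem klein_mul_klein : klein u * klein u = u := by
  simp only [klein, add_mul, mul_add, smul_mul_assoc, mul_smul_comm, one_mul, mul_one, huu]
  match_scalars <;> ring_nf <;> simp only [I_sq] <;> ring

theorem kleinInv_mul_kleinInv : kleinInv u * kleinInv u = u := by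
  simp only [kleinInv, add_mul, mul_add, smul_mul_assoc, mul_smul_comm, one_mul, mul_one, huu]
  match_scalars <;> ring_nf <;> simp only [I_sq] <;> ring

theorem isUnit_klein : IsUnit (klein u) :=
  ⟨⟨klein u, kleinInv u, klein_mul_kleinInv huu, kleinInv_mul_klein huu⟩, rfl⟩

theorem klein_conj_klein_conj (b : E →L[ℂ] E) :
    klein u * (klein u * b * kleinInv u) * kleinInv u = u * b * u := by
  simp only [mul_assoc, kleinInv_mul_kleinInv huu]
  rw [← mul_assoc (klein u), klein_mul_klein huu]

theorem mul_eq_conj_mul_iff_commute_klein_conj {y : E →L[ℂ] E} (hy : u * y = -(y * u))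
    (b : E →L[ℂ] E) : y * b = u * b * u * y ↔ Commute y (klein u * b * kleinInv u) := by
  set c := klein u * b * kleinInv u
  have hb : b = kleinInv u * c * klein u := by
    simp only [c, mul_assoc, kleinInv_mul_klein huu, mul_one]
    rw [← mul_assoc, kleinInv_mul_klein huu, one_mul]
  have h₁ : y * b = -I • (klein u * (y * c) * klein u) := by
    rw [hb, ← mul_assoc, ← mul_assoc, mul_kleinInv_of_anticommute hy]
    simp only [smul_mul_assoc, mul_assoc]
  have h₂ : u * b * u * y = -I • (klein u * (c * y) * klein u) := by
    rw [← klein_conj_klein_conj huu, mul_assoc _ (kleinInv u), kleinInv_mul_of_anticommute hy]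
    simp only [c, mul_smul_comm, mul_assoc]
  rw [h₁, h₂, smul_right_inj (neg_ne_zero.mpr I_ne_zero), (isUnit_klein huu).mul_left_inj,
    (isUnit_klein huu).mul_right_inj, commute_iff_eq]

end Klein

section Graded

variable {E : Type*} [NormedAddCommGroup E] [InnerProductSpace ℂ E] {u : E →L[ℂ] E}
  {S : Set (E →L[ℂ] E)} (huu : u * u = 1) (hS : ∀ a ∈ S, u * a * u ∈ S)
include huu hS

theorem mem_superCommutant_iff (b : E →L[ℂ] E) :
    b ∈ superCommutant u S ↔ klein u * b * kleinInv u ∈ S.centralizer := by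
  have graded (P : (E →L[ℂ] E) → Prop) : (∀ a ∈ S, P a) ↔ ∀ a ∈ S, P a ∧ P (u * a * u) :=
    ⟨fun h a ha => ⟨h a ha, h _ (hS a ha)⟩, fun h a ha => (h a ha).1⟩
  calc b ∈ superCommutant u S
      ↔ ∀ a ∈ S, superComm u a b = 0 ∧ superComm u (u * a * u) b = 0 := graded _
    _ ↔ ∀ a ∈ S, Commute a (klein u * b * kleinInv u) ∧
          Commute (u * a * u) (klein u * b * kleinInv u) := forall₂_congr fun a _ => by
      rw [superComm_eq_zero_and_conj_iff huu, commute_and_commute_conj_iff,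
        commute_conj_iff_of_commute (kleinInv_mul_klein huu)
          (commute_klein (evenPart_commute huu a)) (commute_kleinInv (evenPart_commute huu a)),
        mul_eq_conj_mul_iff_commute_klein_conj huu (oddPart_anticommute huu a)]
    _ ↔ klein u * b * kleinInv u ∈ S.centralizer := (graded _).symm

theorem superCommutant_eq_setOf :
    superCommutant u S = {b | klein u * b * kleinInv u ∈ S.centralizer} :=
  Set.ext (mem_superCommutant_iff huu hS)

theorem conj_mem_iff (b : E →L[ℂ] E) : u * b * u ∈ S ↔ b ∈ S := by
  refine ⟨fun h => ?_, hS b⟩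
  simpa only [mul_assoc, huu, mul_one, ← mul_assoc u u, one_mul] using hS _ h

theorem conj_mem_centralizer {c : E →L[ℂ] E} (hc : c ∈ S.centralizer) :
    u * c * u ∈ S.centralizer := by
  rw [Set.mem_centralizer_iff] at hc ⊢
  intro a ha
  have := congrArg (u * · * u) (hc _ (hS a ha))
  simpa only [mul_assoc, huu, mul_one, ← mul_assoc u u, one_mul] using this

theorem conj_mem_superCommutant {b : E →L[ℂ] E} (hb : b ∈ superCommutant u S) :
    u * b * u ∈ superCommutant u S := by
  rw [mem_superCommutant_iff huu hS] at hb ⊢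
  have hκ : klein u * (u * b * u) * kleinInv u = u * (klein u * b * kleinInv u) * u := by
    simp only [klein, kleinInv, add_mul, mul_add, smul_mul_assoc, mul_smul_comm, one_mul,
      mul_one, mul_assoc]
  rw [hκ]
  exact conj_mem_centralizer huu hS hb

end Graded

theorem superCommutant_superCommutant_general
    (p₀ p₁ : H →L[ℂ] H)
    (h₀ : IsIdempotentElem p₀)
    (hsum : p₀ + p₁ = 1)
    (u : H →L[ℂ] H) (hu : u = p₀ - p₁)
    (A : VonNeumannAlgebra H)
    (hgraded : ∀ a ∈ (A : Set (H →L[ℂ] H)), u * a * u ∈ (A : Set (H →L[ℂ] H))) :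
    superCommutant u (superCommutant u (A : Set (H →L[ℂ] H))) =
      (A : Set (H →L[ℂ] H)) := by
  have huu : u * u = 1 := hu ▸ h₀.sub_mul_sub_of_add_eq_one hsum
  ext b
  rw [mem_superCommutant_iff huu (fun _ => conj_mem_superCommutant huu hgraded),
    superCommutant_eq_setOf huu hgraded,
    Set.centralizer_setOf_conj_mem (klein_mul_kleinInv huu) (kleinInv_mul_klein huu),
    Set.mem_ofPred_eq, klein_conj_klein_conj huu, A.centralizer_centralizer]
  exact conj_mem_iff huu hgraded b

/-- For a ℤ/2-graded von Neumann algebra `A` (i.e. `uAu = A`), the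
double supercommutant satisfies `A^♮♮ = A`. -/
theorem superCommutant_superCommutant
    (p₀ p₁ : H →L[ℂ] H)
    (h₀ : IsIdempotentElem p₀) (h₁ : IsIdempotentElem p₁)
    (h₀sa : IsSelfAdjoint p₀) (h₁sa : IsSelfAdjoint p₁)
    (horth : p₀ * p₁ = 0) (hsum : p₀ + p₁ = 1)
    (u : H →L[ℂ] H) (hu : u = p₀ - p₁)
    (A : VonNeumannAlgebra H)
    (hgraded : ∀ a ∈ (A : Set (H →L[ℂ] H)), u * a * u ∈ (A : Set (H →L[ℂ] H))) :
    superCommutant u (superCommutant u (A : Set (H →L[ℂ] H))) =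
      (A : Set (H →L[ℂ] H)) :=
  superCommutant_superCommutant_general p₀ p₁ h₀ hsum u hu A hgraded
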